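/- Consider a switched Markov jump linear system with finite mode sets K and K̃, matrices A_{i,j} ∈ ℝ^{n×n}, B_{i,j} ∈ ℝ^{n×m}, C_{i,j} ∈ ℝ^{q×n}, D_{i,j} ∈ ℝ^{q×m} for i ∈ K̃, j ∈ K, and probabilities t_i^j ≥ 0 with Σ_{i∈K̃} t_i^j = 1 for each j ∈ K, and let γ > 0. Suppose there exist a symmetric positive definite matrix Q and a symmetric matrix Z with trace(Z) < γ² such that for every j ∈ K: Σ_{i∈K̃} t_i^j (A_{i,j}ᵀ Q A_{i,j} + C_{i,j}ᵀ C_{i,j}) ≺ Q and Σ_{i∈K̃} t_i^j (B_{i,j}ᵀ Q B_{i,j} + D_{i,j}ᵀ D_{i,j}) ≺ Z. Then for every deterministic switching sequence ν : ℕ → K and every sequence (σ_k)_{k∈ℕ} of mutually independent K̃-valued random variables with ℙ(σ_k = i) = t_i^{ν_k}, the total impulse-response energy satisfies Σ_{s=1}^{m} Σ_{k=0}^{∞} E[‖z_k^{ν,s}‖²] < γ², where for each input channel s the impulse response is z_0^{ν,s} = D_{σ_0,ν_0} e_s, ξ_1^s = B_{σ_0,ν_0} e_s, and for k ≥ 1: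 ξ_{k+1}^s = A_{σ_k,ν_k} ξ_k^s and z_k^{ν,s} = C_{σ_k,ν_k} ξ_k^s, with e_s the s-th standard basis vector of ℝ^m. -/

import Mathlib

/-!
`V_k = E[ξ_kᵀ Q ξ_k]` is a storage function for the impulse response. The mode `σ_k` is independent
of `ξ_k`, which depends only on `σ_0, …, σ_{k-1}`, and has law `t^{ν_k}`; hence the first LMI gives
`V_{k+1} + E‖z_k‖² ≤ V_k`, and the second gives `V_1 + E‖z_0‖² ≤ e_sᵀ Z e_s = Z_{ss}`.
Telescoping bounds the output energy of channel `s` by `Z_{ss}`, and the sum over the channels by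
`trace Z < γ²`. All expectations are finite sums over mode paths weighted by products of the `t`'s.
-/

open MeasureTheory ProbabilityTheory Matrix

theorem integral_comp_eq_sum_prod {ι Ω α E : Type*} [Fintype ι] [DecidableEq ι] [Fintype α]
    [MeasurableSpace α] [MeasurableSingletonClass α] [MeasurableSpace Ω] {μ : Measure Ω}
    [NormedAddCommGroup E] [NormedSpace ℝ E] [CompleteSpace E]
    {X : ι → Ω → α} (hX : ∀ i, Measurable (X i)) (hind : iIndepFun X μ) (f : (ι → α) → E) :
    ∫ ω, f (fun i ↦ X i ω) ∂μ = ∑ v, (∏ i, μ.real (X i ⁻¹' {v i})) • f v := by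
  have := hind.isProbabilityMeasure
  rw [← integral_map (by fun_prop) AEStronglyMeasurable.of_discrete,
    hind.map_fun_eq_pi_map fun i ↦ (hX i).aemeasurable, integral_fintype .of_finite]
  congr! 2 with v
  simp [measureReal_def, Measure.map_apply (hX _) (measurableSet_singleton _), ENNReal.toReal_prod]

section QuadraticForm

variable {ι ι₁ ι₂ κ : Type*} [Fintype ι] [Fintype ι₁] [Fintype ι₂] [Fintype κ]

theorem dotProduct_mulVec_le_of_posSemidef_sub {R S : Matrix ι ι ℝ} (h : (R - S).PosSemidef)
    (x : ι → ℝ) : x ⬝ᵥ S *ᵥ x ≤ x ⬝ᵥ R *ᵥ x := by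
  have := h.dotProduct_mulVec_nonneg x
  rw [star_trivial, sub_mulVec, dotProduct_sub] at this
  linarith

theorem dotProduct_transpose_mul_mul_mulVec (F : Matrix ι₁ ι ℝ) (P : Matrix ι₁ ι₁ ℝ)
    (x : ι → ℝ) : x ⬝ᵥ (Fᵀ * P * F) *ᵥ x = F *ᵥ x ⬝ᵥ P *ᵥ (F *ᵥ x) := by
  rw [← mulVec_mulVec, ← mulVec_mulVec, dotProduct_mulVec, vecMul_transpose]

theorem sum_mul_dissipation_le {t : κ → ℝ} {R : Matrix ι ι ℝ} {P : Matrix ι₁ ι₁ ℝ}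
    {F : κ → Matrix ι₁ ι ℝ} {G : κ → Matrix ι₂ ι ℝ}
    (h : (R - ∑ i, t i • ((F i)ᵀ * P * F i + (G i)ᵀ * G i)).PosSemidef) (x : ι → ℝ) :
    ∑ i, t i * (F i *ᵥ x ⬝ᵥ P *ᵥ (F i *ᵥ x) + G i *ᵥ x ⬝ᵥ G i *ᵥ x) ≤ x ⬝ᵥ R *ᵥ x := by
  refine le_of_eq_of_le ?_ (dotProduct_mulVec_le_of_posSemidef_sub h x)
  simp only [sum_mulVec, dotProduct_sum, smul_mulVec, dotProduct_smul, smul_eq_mul, add_mulVec,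
    dotProduct_add, dotProduct_transpose_mul_mul_mulVec]
  simp [← mulVec_mulVec, dotProduct_mulVec, vecMul_transpose]

end QuadraticForm

section PathMean

variable {α : Type*} [Fintype α]

/-- The expectation of `f (σ 0, …, σ (k - 1))` for independent modes with `ℙ(σ j = i) = p j i`. -/
def pathMean (p : ℕ → α → ℝ) (k : ℕ) (f : (Fin k → α) → ℝ) : ℝ :=
  ∑ v, (∏ j : Fin k, p j (v j)) * f v

variable {p : ℕ → α → ℝ} {k : ℕ}

theorem pathMean_zero (f : (Fin 0 → α) → ℝ) : pathMean p 0 f = f Fin.elim0 := by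
  simp [pathMean, Subsingleton.elim _ (Fin.elim0 : Fin 0 → α)]

theorem pathMean_succ (f : (Fin (k + 1) → α) → ℝ) :
    pathMean p (k + 1) f = pathMean p k fun w ↦ ∑ i, p k i * f (Fin.snoc w i) := by
  simp only [pathMean, Finset.mul_sum]
  rw [← (Fin.snocEquiv fun _ ↦ α).sum_comp, Fintype.sum_prod_type, Finset.sum_comm]
  refine Fintype.sum_congr _ _ fun w ↦ Fintype.sum_congr _ _ fun i ↦ ?_
  simp [Fin.snocEquiv, Fin.prod_univ_castSucc, mul_comm, mul_assoc, mul_left_comm]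

theorem pathMean_add (f g : (Fin k → α) → ℝ) :
    pathMean p k (f + g) = pathMean p k f + pathMean p k g := by
  simp [pathMean, mul_add, Finset.sum_add_distrib]

theorem pathMean_mono (hp : ∀ j i, 0 ≤ p j i) {f g : (Fin k → α) → ℝ} (hfg : f ≤ g) :
    pathMean p k f ≤ pathMean p k g :=
  Finset.sum_le_sum fun v _ ↦
    mul_le_mul_of_nonneg_left (hfg v) (Finset.prod_nonneg fun _ _ ↦ hp _ _)

theorem pathMean_nonneg (hp : ∀ j i, 0 ≤ p j i) {f : (Fin k → α) → ℝ} (hf : 0 ≤ f) :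
    0 ≤ pathMean p k f := by
  simpa [pathMean] using pathMean_mono hp hf

end PathMean

section ImpulseResponse

variable {K Ktil : Type*} {n m q : ℕ} (A : Ktil → K → Matrix (Fin n) (Fin n) ℝ)
  (B : Ktil → K → Matrix (Fin n) (Fin m) ℝ) (C : Ktil → K → Matrix (Fin q) (Fin n) ℝ)
  (D : Ktil → K → Matrix (Fin q) (Fin m) ℝ) (ν : ℕ → K) (u : Fin m → ℝ)

/-- The state `ξ_{k+1}` reached from the input impulse `u` along the modes `v 0, …, v k`. -/
def impulseState : (k : ℕ) → (Fin (k + 1) → Ktil) → Fin n → ℝ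
  | 0, v => B (v 0) (ν 0) *ᵥ u
  | k + 1, v => A (v (Fin.last _)) (ν (k + 1)) *ᵥ impulseState k (Fin.init v)

def impulseOutput : (k : ℕ) → (Fin (k + 1) → Ktil) → Fin q → ℝ
  | 0, v => D (v 0) (ν 0) *ᵥ u
  | k + 1, v => C (v (Fin.last _)) (ν (k + 1)) *ᵥ impulseState A B ν u k (Fin.init v)

@[simp]
theorem impulseState_snoc {k : ℕ} (w : Fin (k + 1) → Ktil) (i : Ktil) :
    impulseState A B ν u (k + 1) (Fin.snoc w i) =
      A i (ν (k + 1)) *ᵥ impulseState A B ν u k w := by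
  simp [impulseState]

@[simp]
theorem impulseOutput_snoc {k : ℕ} (w : Fin (k + 1) → Ktil) (i : Ktil) :
    impulseOutput A B C D ν u (k + 1) (Fin.snoc w i) =
      C i (ν (k + 1)) *ᵥ impulseState A B ν u k w := by
  simp [impulseOutput]

variable {A B C D ν u} {Ω : Type*} {σ : ℕ → Ω → Ktil}

theorem impulseState_eq {ξ : ℕ → Ω → Fin n → ℝ} (hξ₁ : ∀ ω, ξ 1 ω = B (σ 0 ω) (ν 0) *ᵥ u)
    (hrec : ∀ k, 1 ≤ k → ∀ ω, ξ (k + 1) ω = A (σ k ω) (ν k) *ᵥ ξ k ω) (k : ℕ) (ω : Ω) :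
    ξ (k + 1) ω = impulseState A B ν u k fun j ↦ σ j ω := by
  induction k with
  | zero => exact hξ₁ ω
  | succ k ih => rw [hrec _ k.succ_pos, ih]; rfl

theorem impulseOutput_eq {ξ : ℕ → Ω → Fin n → ℝ} {z : ℕ → Ω → Fin q → ℝ}
    (hz₀ : ∀ ω, z 0 ω = D (σ 0 ω) (ν 0) *ᵥ u) (hξ₁ : ∀ ω, ξ 1 ω = B (σ 0 ω) (ν 0) *ᵥ u)
    (hrec : ∀ k, 1 ≤ k → ∀ ω, ξ (k + 1) ω = A (σ k ω) (ν k) *ᵥ ξ k ω)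
    (hout : ∀ k, 1 ≤ k → ∀ ω, z k ω = C (σ k ω) (ν k) *ᵥ ξ k ω) (k : ℕ) (ω : Ω) :
    z k ω = impulseOutput A B C D ν u k fun j ↦ σ j ω := by
  cases k with
  | zero => exact hz₀ ω
  | succ k => rw [hout _ k.succ_pos, impulseState_eq hξ₁ hrec]; rfl

end ImpulseResponse

section Lyapunov

variable {K Ktil : Type*} [Fintype Ktil] {n m q : ℕ} (A : Ktil → K → Matrix (Fin n) (Fin n) ℝ)
  (B : Ktil → K → Matrix (Fin n) (Fin m) ℝ) (C : Ktil → K → Matrix (Fin q) (Fin n) ℝ)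
  (D : Ktil → K → Matrix (Fin q) (Fin m) ℝ) (t : Ktil → K → ℝ) (ν : ℕ → K) (u : Fin m → ℝ)
  (Q : Matrix (Fin n) (Fin n) ℝ)

def expectedStorage (k : ℕ) : ℝ :=
  pathMean (fun j i ↦ t i (ν j)) (k + 1) fun v ↦
    impulseState A B ν u k v ⬝ᵥ Q *ᵥ impulseState A B ν u k v

def expectedOutputEnergy (k : ℕ) : ℝ :=
  pathMean (fun j i ↦ t i (ν j)) (k + 1) fun v ↦
    impulseOutput A B C D ν u k v ⬝ᵥ impulseOutput A B C D ν u k v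

variable {A B C D t ν u Q} {Z : Matrix (Fin m) (Fin m) ℝ}

theorem expectedStorage_zero_add_le
    (hLMI₂ : (Z - ∑ i, t i (ν 0) •
      ((B i (ν 0))ᵀ * Q * B i (ν 0) + (D i (ν 0))ᵀ * D i (ν 0))).PosSemidef) :
    expectedStorage A B t ν u Q 0 + expectedOutputEnergy A B C D t ν u 0 ≤ u ⬝ᵥ Z *ᵥ u := by
  rw [expectedStorage, expectedOutputEnergy, ← pathMean_add, pathMean_succ, pathMean_zero]
  simpa [impulseState, impulseOutput, Fin.snoc_zero] using sum_mul_dissipation_le hLMI₂ u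

theorem expectedStorage_succ_add_le (ht : ∀ i j, 0 ≤ t i j) (k : ℕ)
    (hLMI₁ : (Q - ∑ i, t i (ν (k + 1)) • ((A i (ν (k + 1)))ᵀ * Q * A i (ν (k + 1)) +
      (C i (ν (k + 1)))ᵀ * C i (ν (k + 1)))).PosSemidef) :
    expectedStorage A B t ν u Q (k + 1) + expectedOutputEnergy A B C D t ν u (k + 1) ≤
      expectedStorage A B t ν u Q k := by
  rw [expectedStorage, expectedOutputEnergy, ← pathMean_add, pathMean_succ]
  refine pathMean_mono (fun _ _ ↦ ht _ _) fun _ ↦ ?_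
  simpa using sum_mul_dissipation_le hLMI₁ _

theorem expectedStorage_nonneg (ht : ∀ i j, 0 ≤ t i j) (hQ : Q.PosSemidef) (k : ℕ) :
    0 ≤ expectedStorage A B t ν u Q k :=
  pathMean_nonneg (fun _ _ ↦ ht _ _) fun v ↦ by
    simpa using hQ.dotProduct_mulVec_nonneg (impulseState A B ν u k v)

theorem expectedOutputEnergy_nonneg (ht : ∀ i j, 0 ≤ t i j) (k : ℕ) :
    0 ≤ expectedOutputEnergy A B C D t ν u k :=
  pathMean_nonneg (fun _ _ ↦ ht _ _) fun _ ↦ dotProduct_self_star_nonneg _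

theorem expectedStorage_add_sum_expectedOutputEnergy_le (ht : ∀ i j, 0 ≤ t i j)
    (hLMI₁ : ∀ j, (Q - ∑ i, t i j • ((A i j)ᵀ * Q * A i j + (C i j)ᵀ * C i j)).PosSemidef)
    (hLMI₂ : (Z - ∑ i, t i (ν 0) •
      ((B i (ν 0))ᵀ * Q * B i (ν 0) + (D i (ν 0))ᵀ * D i (ν 0))).PosSemidef) (N : ℕ) :
    expectedStorage A B t ν u Q N +
      ∑ k ∈ Finset.range (N + 1), expectedOutputEnergy A B C D t ν u k ≤ u ⬝ᵥ Z *ᵥ u := by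
  induction N with
  | zero => simpa [add_comm] using expectedStorage_zero_add_le (C := C) hLMI₂
  | succ N ih =>
    have step := expectedStorage_succ_add_le (B := B) (D := D) (ν := ν) (u := u) ht N (hLMI₁ _)
    rw [Finset.sum_range_succ]
    linarith

theorem tsum_expectedOutputEnergy_le (ht : ∀ i j, 0 ≤ t i j) (hQ : Q.PosSemidef)
    (hLMI₁ : ∀ j, (Q - ∑ i, t i j • ((A i j)ᵀ * Q * A i j + (C i j)ᵀ * C i j)).PosSemidef)
    (hLMI₂ : (Z - ∑ i, t i (ν 0) •
      ((B i (ν 0))ᵀ * Q * B i (ν 0) + (D i (ν 0))ᵀ * D i (ν 0))).PosSemidef) :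
    ∑' k, expectedOutputEnergy A B C D t ν u k ≤ u ⬝ᵥ Z *ᵥ u := by
  refine Real.tsum_le_of_sum_range_le (expectedOutputEnergy_nonneg ht) fun N ↦
    le_trans ?_ (expectedStorage_add_sum_expectedOutputEnergy_le ht hLMI₁ hLMI₂ N)
  rw [Finset.sum_range_succ]
  exact le_add_of_nonneg_of_le (expectedStorage_nonneg ht hQ N)
    (le_add_of_nonneg_right (expectedOutputEnergy_nonneg ht N))

theorem integral_dotProduct_self_eq_expectedOutputEnergy (ht : ∀ i j, 0 ≤ t i j)
    [MeasurableSpace Ktil] [MeasurableSingletonClass Ktil] {Ω : Type*} [MeasurableSpace Ω]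
    {μ : Measure Ω} {σ : ℕ → Ω → Ktil} (hσmeas : ∀ k, Measurable (σ k))
    (hσindep : iIndepFun σ μ) (hσdist : ∀ k i, μ {ω | σ k ω = i} = ENNReal.ofReal (t i (ν k)))
    {ξ : ℕ → Ω → Fin n → ℝ} {z : ℕ → Ω → Fin q → ℝ}
    (hz₀ : ∀ ω, z 0 ω = D (σ 0 ω) (ν 0) *ᵥ u) (hξ₁ : ∀ ω, ξ 1 ω = B (σ 0 ω) (ν 0) *ᵥ u)
    (hrec : ∀ k, 1 ≤ k → ∀ ω, ξ (k + 1) ω = A (σ k ω) (ν k) *ᵥ ξ k ω)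
    (hout : ∀ k, 1 ≤ k → ∀ ω, z k ω = C (σ k ω) (ν k) *ᵥ ξ k ω) (k : ℕ) :
    ∫ ω, z k ω ⬝ᵥ z k ω ∂μ = expectedOutputEnergy A B C D t ν u k := by
  simp_rw [impulseOutput_eq hz₀ hξ₁ hrec hout k]
  refine (integral_comp_eq_sum_prod (X := fun j : Fin (k + 1) ↦ σ j) (fun j ↦ hσmeas j)
    (hσindep.precomp Fin.val_injective)
    fun v ↦ impulseOutput A B C D ν u k v ⬝ᵥ impulseOutput A B C D ν u k v).trans ?_
  simp [expectedOutputEnergy, pathMean, measureReal_def, Set.preimage, hσdist, ht]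

end Lyapunov

theorem switched_mjls_h2_bound_general
    {K Ktil : Type*} [Fintype Ktil]
    [MeasurableSpace Ktil] [MeasurableSingletonClass Ktil]
    {n m q : ℕ}
    (A : Ktil → K → Matrix (Fin n) (Fin n) ℝ)
    (B : Ktil → K → Matrix (Fin n) (Fin m) ℝ)
    (C : Ktil → K → Matrix (Fin q) (Fin n) ℝ)
    (D : Ktil → K → Matrix (Fin q) (Fin m) ℝ)
    (t : Ktil → K → ℝ)
    (ht : ∀ i j, 0 ≤ t i j)
    (γ : ℝ)
    (Q : Matrix (Fin n) (Fin n) ℝ) (hQ : Q.PosDef)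
    (Z : Matrix (Fin m) (Fin m) ℝ) (hZtr : Z.trace < γ ^ 2)
    (hLMI₁ : ∀ j,
      (Q - ∑ i, t i j • ((A i j)ᵀ * Q * A i j + (C i j)ᵀ * C i j)).PosDef)
    (hLMI₂ : ∀ j,
      (Z - ∑ i, t i j • ((B i j)ᵀ * Q * B i j + (D i j)ᵀ * D i j)).PosDef)
    {Ω : Type*} [MeasurableSpace Ω] (μ : Measure Ω)
    (ν : ℕ → K) (σ : ℕ → Ω → Ktil)
    (hσmeas : ∀ k, Measurable (σ k))
    (hσindep : iIndepFun σ μ)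
    (hσdist : ∀ k i, μ {ω | σ k ω = i} = ENNReal.ofReal (t i (ν k)))
    (ξ : Fin m → ℕ → Ω → Fin n → ℝ) (z : Fin m → ℕ → Ω → Fin q → ℝ)
    (hz₀ : ∀ s ω, z s 0 ω = (D (σ 0 ω) (ν 0)).mulVec (Pi.single s 1))
    (hξ₁ : ∀ s ω, ξ s 1 ω = (B (σ 0 ω) (ν 0)).mulVec (Pi.single s 1))
    (hrec : ∀ s k, 1 ≤ k → ∀ ω, ξ s (k + 1) ω = (A (σ k ω) (ν k)).mulVec (ξ s k ω))
    (hout : ∀ s k, 1 ≤ k → ∀ ω, z s k ω = (C (σ k ω) (ν k)).mulVec (ξ s k ω)) :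
    ∑ s : Fin m, ∑' k : ℕ, ∫ ω, z s k ω ⬝ᵥ z s k ω ∂μ < γ ^ 2 := by
  have channel_le : ∀ s, ∑' k, ∫ ω, z s k ω ⬝ᵥ z s k ω ∂μ ≤ Z s s := fun s ↦ by
    simp_rw [integral_dotProduct_self_eq_expectedOutputEnergy ht hσmeas hσindep hσdist
      (hz₀ s) (hξ₁ s) (hrec s) (hout s)]
    simpa using tsum_expectedOutputEnergy_le (u := Pi.single s 1) ht hQ.posSemidef
      (fun j ↦ (hLMI₁ j).posSemidef) (hLMI₂ (ν 0)).posSemidef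
  calc ∑ s, ∑' k, ∫ ω, z s k ω ⬝ᵥ z s k ω ∂μ ≤ ∑ s, Z s s :=
        Finset.sum_le_sum fun s _ ↦ channel_le s
    _ < γ ^ 2 := hZtr

/-- (`H₂` performance of switched Markov jump linear systems.) Consider a
switched MJLS with finite mode sets `K`, `K̃`, matrices `A i j, B i j, C i j, D i j` and
probabilities `t i j ≥ 0` with `Σ_i t i j = 1`, and let `γ > 0`. Suppose there are a symmetric
positive definite `Q` and a symmetric `Z` with `trace Z < γ²` such that for every `j`,
`Σ_i t i j • (A i jᵀ Q A i j + C i jᵀ C i j) ≺ Q` and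
`Σ_i t i j • (B i jᵀ Q B i j + D i jᵀ D i j) ≺ Z`.  Then for every deterministic switching
sequence `ν` and every sequence `σ` of mutually independent `K̃`-valued random variables with
`ℙ(σ k = i) = t i (ν k)`, the total impulse-response energy satisfies
`Σ_{s} Σ_{k} E[‖z_k^{ν,s}‖²] < γ²`, where `z_0^{ν,s} = D (σ 0) (ν 0) e_s`,
`ξ_1^s = B (σ 0) (ν 0) e_s`, and for `k ≥ 1`, `ξ_{k+1}^s = A (σ k) (ν k) ξ_k^s` and
`z_k^{ν,s} = C (σ k) (ν k) ξ_k^s`. -/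
theorem switched_mjls_h2_bound
    {K Ktil : Type*} [Fintype K] [Fintype Ktil] [Nonempty K] [Nonempty Ktil]
    [MeasurableSpace Ktil] [MeasurableSingletonClass Ktil]
    {n m q : ℕ}
    (A : Ktil → K → Matrix (Fin n) (Fin n) ℝ)
    (B : Ktil → K → Matrix (Fin n) (Fin m) ℝ)
    (C : Ktil → K → Matrix (Fin q) (Fin n) ℝ)
    (D : Ktil → K → Matrix (Fin q) (Fin m) ℝ)
    (t : Ktil → K → ℝ)
    (ht : ∀ i j, 0 ≤ t i j) (htsum : ∀ j, ∑ i, t i j = 1)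
    (γ : ℝ) (hγ : 0 < γ)
    (Q : Matrix (Fin n) (Fin n) ℝ) (hQsymm : Q.IsSymm) (hQ : Q.PosDef)
    (Z : Matrix (Fin m) (Fin m) ℝ) (hZsymm : Z.IsSymm) (hZtr : Z.trace < γ ^ 2)
    (hLMI₁ : ∀ j,
      (Q - ∑ i, t i j • ((A i j)ᵀ * Q * A i j + (C i j)ᵀ * C i j)).PosDef)
    (hLMI₂ : ∀ j,
      (Z - ∑ i, t i j • ((B i j)ᵀ * Q * B i j + (D i j)ᵀ * D i j)).PosDef)
    {Ω : Type*} [MeasurableSpace Ω] (μ : Measure Ω) [IsProbabilityMeasure μ]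
    (ν : ℕ → K) (σ : ℕ → Ω → Ktil)
    (hσmeas : ∀ k, Measurable (σ k))
    (hσindep : iIndepFun σ μ)
    (hσdist : ∀ k i, μ {ω | σ k ω = i} = ENNReal.ofReal (t i (ν k)))
    (ξ : Fin m → ℕ → Ω → Fin n → ℝ) (z : Fin m → ℕ → Ω → Fin q → ℝ)
    (hz₀ : ∀ s ω, z s 0 ω = (D (σ 0 ω) (ν 0)).mulVec (Pi.single s 1))
    (hξ₁ : ∀ s ω, ξ s 1 ω = (B (σ 0 ω) (ν 0)).mulVec (Pi.single s 1))
    (hrec : ∀ s k, 1 ≤ k → ∀ ω, ξ s (k + 1) ω = (A (σ k ω) (ν k)).mulVec (ξ s k ω))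
    (hout : ∀ s k, 1 ≤ k → ∀ ω, z s k ω = (C (σ k ω) (ν k)).mulVec (ξ s k ω)) :
    ∑ s : Fin m, ∑' k : ℕ, ∫ ω, z s k ω ⬝ᵥ z s k ω ∂μ < γ ^ 2 :=
  switched_mjls_h2_bound_general A B C D t ht γ Q hQ Z hZtr hLMI₁ hLMI₂ μ ν σ hσmeas hσindep hσdist
    ξ z hz₀ hξ₁ hrec hout
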